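/- Let κ ∈ (-1,1) and define M(α) = (e^{2iα} + κ)/(1 + κe^{2iα}) for α ∈ ℝ; M never vanishes, so integer powers M(α)^q are defined for all q ∈ ℤ. For q ∈ ℤ set h_q(α) = e^{iα}·(M(α)^q - κ·M(α)^{q+1}). Then: if q ≥ 0, ∫₀^{2π} h_q(α) e^{-inα} dα = 0 for every integer n ≤ 0 (h_q is a strictly holomorphic Fourier series in e^{iα}); and if q ≤ -1, ∫₀^{2π} h_q(α) e^{-inα} dα = 0 for every integer n ≥ 0 (h_q is a strictly antiholomorphic Fourier series in e^{iα}). -/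

import Mathlib

/-!
Write `z = e^{iα}`. Then `M = (z² + κ) / (1 + κz²)`, and since `(1 + κz²) - κ(z² + κ) = 1 - κ²`,
for `p ≥ 0` we get `h_p = (1 - κ²) z (z² + κ)^p / (1 + κz²)^(p+1)`. For `|κ| < 1` this is `z` times
a function holomorphic near the closed unit disk, so `h_p e^{imα}` (`m ≥ 0`) integrates to zero by
Cauchy's theorem. For negative exponents, `M(-α) = M(α)⁻¹` together with `M - κ = z²(1 - κM)` gives
`h_{-q-1}(α) = h_q(-α)`, and the substitution `α ↦ -α` turns the antiholomorphic case into the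
holomorphic one.
-/

open Real Complex intervalIntegral

/-- The boundary function `M(α) = (e^{2iα} + κ)/(1 + κ e^{2iα})`. -/
noncomputable def Mfun (κ : ℝ) (α : ℝ) : ℂ :=
  (Complex.exp (2 * Complex.I * α) + κ) / (1 + κ * Complex.exp (2 * Complex.I * α))

/-- `h_q(α) = e^{iα} (M(α)^q - κ M(α)^{q+1})` for `q : ℤ`. -/
noncomputable def hfun (κ : ℝ) (q : ℤ) (α : ℝ) : ℂ :=
  Complex.exp (Complex.I * α) * (Mfun κ α ^ q - κ * Mfun κ α ^ (q + 1))

open Metric Function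

section CircleIntegral

variable {E : Type*} [NormedAddCommGroup E] [NormedSpace ℂ E] {f : ℂ → E}

theorem integral_exp_mul_I_smul_comp_eq_zero (hf : DiffContOnCl ℂ f (ball 0 1)) :
    ∫ θ in (0 : ℝ)..2 * π, cexp (θ * I) • f (cexp (θ * I)) = 0 := by
  have h := hf.circleIntegral_eq_zero zero_le_one
  simp only [circleIntegral, deriv_circleMap, circleMap_zero, ofReal_one, one_mul, mul_smul,
    smul_comm _ I, intervalIntegral.integral_smul, smul_eq_zero, I_ne_zero, false_or] at h
  exact h

theorem integral_exp_neg_mul_I_smul_comp_eq_zero (hf : DiffContOnCl ℂ f (ball 0 1)) :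
    ∫ θ in (0 : ℝ)..2 * π, cexp (-θ * I) • f (cexp (-θ * I)) = 0 := by
  have hg : Periodic (fun θ : ℝ => cexp (θ * I) • f (cexp (θ * I))) (2 * π) := fun θ => by
    simpa using congrArg (fun z => z • f z) (exp_mul_I_periodic θ)
  have h := integral_comp_neg (a := 0) (b := 2 * π) (fun θ : ℝ => cexp (θ * I) • f (cexp (θ * I)))
  have h' := hg.intervalIntegral_add_eq (-(2 * π)) 0
  rw [neg_add_cancel, zero_add] at h'
  simp only [ofReal_neg, neg_zero] at h
  rw [h, h', integral_exp_mul_I_smul_comp_eq_zero hf]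

end CircleIntegral

section BoundaryFunction

variable {κ : ℝ}

theorem one_add_mul_sq_ne_zero (hκ : |κ| < 1) {z : ℂ} (hz : ‖z‖ ≤ 1) :
    1 + κ * z ^ 2 ≠ 0 := by
  intro h
  have h1 : ‖(κ : ℂ) * z ^ 2‖ = 1 := by rw [eq_neg_of_add_eq_zero_right h, norm_neg, norm_one]
  rw [norm_mul, norm_pow, norm_real, Real.norm_eq_abs] at h1
  nlinarith [abs_nonneg κ, pow_le_one₀ (n := 2) (norm_nonneg z) hz]

theorem sq_add_ne_zero (hκ : |κ| < 1) {z : ℂ} (hz : ‖z‖ = 1) : z ^ 2 + κ ≠ 0 := by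
  intro h
  have h1 : ‖z ^ 2‖ = ‖(κ : ℂ)‖ := by rw [eq_neg_of_add_eq_zero_left h, norm_neg]
  rw [norm_pow, hz, norm_real, Real.norm_eq_abs] at h1
  linarith

theorem Mfun_eq (κ α : ℝ) :
    Mfun κ α = (cexp (I * α) ^ 2 + κ) / (1 + κ * cexp (I * α) ^ 2) := by
  rw [Mfun, ← Complex.exp_nat_mul, Nat.cast_ofNat, ← mul_assoc]

theorem Mfun_ne_zero (hκ : |κ| < 1) (α : ℝ) : Mfun κ α ≠ 0 := by
  rw [Mfun_eq]
  exact div_ne_zero (sq_add_ne_zero hκ (norm_exp_I_mul_ofReal α))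
    (one_add_mul_sq_ne_zero hκ (norm_exp_I_mul_ofReal α).le)

theorem Mfun_neg (κ α : ℝ) : Mfun κ (-α) = (Mfun κ α)⁻¹ := by
  have hz := exp_ne_zero (I * α)
  rw [Mfun_eq, Mfun_eq, inv_div, ofReal_neg, mul_neg, Complex.exp_neg,
    ← mul_div_mul_right _ _ (pow_ne_zero 2 hz)]
  congr 1 <;> field_simp

theorem Mfun_sub (hκ : |κ| < 1) (α : ℝ) :
    Mfun κ α - κ = cexp (I * α) ^ 2 * (1 - κ * Mfun κ α) := by
  have hD := one_add_mul_sq_ne_zero hκ (norm_exp_I_mul_ofReal α).le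
  rw [Mfun_eq, mul_div_assoc', div_sub' hD, one_sub_div hD]
  ring

theorem hfun_neg_sub_one (hκ : |κ| < 1) (q : ℤ) (α : ℝ) :
    hfun κ (-q - 1) α = hfun κ q (-α) := by
  have hM := Mfun_ne_zero hκ α
  have hz := exp_ne_zero (I * α)
  rw [hfun, hfun, Mfun_neg, inv_zpow', inv_zpow', ofReal_neg, mul_neg, Complex.exp_neg,
    sub_add_cancel, neg_add', zpow_sub_one₀ hM (-q)]
  field_simp
  linear_combination -Mfun_sub hκ α

/-- For `p ≥ 0`, `e^{-iα} h_p(α)` is the value at `z = e^{iα}` of this rational function, whose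
poles `z² = -1/κ` lie outside the closed unit disk. -/
noncomputable def hfunExt (κ : ℝ) (p : ℕ) (z : ℂ) : ℂ :=
  (1 - κ ^ 2) * (z ^ 2 + κ) ^ p / (1 + κ * z ^ 2) ^ (p + 1)

theorem hfun_natCast (hκ : |κ| < 1) (p : ℕ) (α : ℝ) :
    hfun κ p α = cexp (I * α) * hfunExt κ p (cexp (I * α)) := by
  have hD := one_add_mul_sq_ne_zero hκ (norm_exp_I_mul_ofReal α).le
  have hDA : 1 + κ * cexp (I * α) ^ 2 - κ * (cexp (I * α) ^ 2 + κ) = (1 - κ ^ 2 : ℂ) := by ring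
  rw [hfun, hfunExt, Mfun_eq, ← Nat.cast_add_one, zpow_natCast, zpow_natCast, div_pow, div_pow,
    ← hDA]
  generalize 1 + (κ : ℂ) * cexp (I * α) ^ 2 = D at hD ⊢
  generalize cexp (I * α) ^ 2 + (κ : ℂ) = A
  field_simp
  ring

theorem differentiableOn_hfunExt (hκ : |κ| < 1) (p : ℕ) :
    DifferentiableOn ℂ (hfunExt κ p) (closedBall 0 1) :=
  DifferentiableOn.div (by fun_prop) (by fun_prop) fun _z hz =>
    pow_ne_zero _ (one_add_mul_sq_ne_zero hκ (mem_closedBall_zero_iff.mp hz))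

end BoundaryFunction

section FourierCoefficients

variable {κ : ℝ}

theorem diffContOnCl_pow_mul_hfunExt (hκ : |κ| < 1) (m p : ℕ) :
    DiffContOnCl ℂ (fun z => z ^ m * hfunExt κ p z) (ball 0 1) := by
  refine DifferentiableOn.diffContOnCl ?_
  rw [closure_ball 0 one_ne_zero]
  exact (differentiableOn_pow m).mul (differentiableOn_hfunExt hκ p)

theorem integral_hfun_mul_exp_eq_zero_of_nonneg (hκ : |κ| < 1) {q n : ℤ} (hq : 0 ≤ q)
    (hn : n ≤ 0) : ∫ α in (0 : ℝ)..2 * π, hfun κ q α * cexp (-(n : ℂ) * α * I) = 0 := by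
  lift q to ℕ using hq
  obtain ⟨m, rfl⟩ : ∃ m : ℕ, n = -m := ⟨n.natAbs, by omega⟩
  rw [← integral_exp_mul_I_smul_comp_eq_zero (diffContOnCl_pow_mul_hfunExt hκ m q)]
  refine integral_congr fun α _ => ?_
  rw [hfun_natCast hκ, smul_eq_mul, mul_comm I, ← Complex.exp_nat_mul]
  push_cast
  ring_nf

theorem integral_hfun_mul_exp_eq_zero_of_neg (hκ : |κ| < 1) {q n : ℤ} (hq : q ≤ -1)
    (hn : 0 ≤ n) : ∫ α in (0 : ℝ)..2 * π, hfun κ q α * cexp (-(n : ℂ) * α * I) = 0 := by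
  obtain ⟨p, rfl⟩ : ∃ p : ℕ, q = -p - 1 := ⟨(-q - 1).toNat, by omega⟩
  lift n to ℕ using hn
  rw [← integral_exp_neg_mul_I_smul_comp_eq_zero (diffContOnCl_pow_mul_hfunExt hκ n p)]
  refine integral_congr fun α _ => ?_
  rw [hfun_neg_sub_one hκ, hfun_natCast hκ, smul_eq_mul, ofReal_neg, mul_comm I,
    ← Complex.exp_nat_mul]
  push_cast
  ring_nf

end FourierCoefficients

/-- For `κ ∈ (-1,1)`: `M` never vanishes; for `q ≥ 0`, `h_q` is a strictly holomorphic Fourier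
series in `e^{iα}` (all Fourier coefficients at frequencies `n ≤ 0` vanish); and for `q ≤ -1`,
`h_q` is a strictly antiholomorphic Fourier series (all coefficients at `n ≥ 0` vanish). -/
theorem hfun_holomorphicity (κ : ℝ) (hκ : κ ∈ Set.Ioo (-1 : ℝ) 1) :
    (∀ α : ℝ, Mfun κ α ≠ 0) ∧
    (∀ q : ℤ, 0 ≤ q → ∀ n : ℤ, n ≤ 0 →
      ∫ α in (0 : ℝ)..(2 * π), hfun κ q α * Complex.exp (-(n : ℂ) * α * Complex.I) = 0) ∧
    (∀ q : ℤ, q ≤ -1 → ∀ n : ℤ, 0 ≤ n →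
      ∫ α in (0 : ℝ)..(2 * π), hfun κ q α * Complex.exp (-(n : ℂ) * α * Complex.I) = 0) := by
  have hκ' : |κ| < 1 := abs_lt.mpr hκ
  exact ⟨Mfun_ne_zero hκ', fun _ hq _ hn => integral_hfun_mul_exp_eq_zero_of_nonneg hκ' hq hn,
    fun _ hq _ hn => integral_hfun_mul_exp_eq_zero_of_neg hκ' hq hn⟩
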